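/- arXiv:1005.1046 — 3 statements merged into one kernel-verified Lean document; each statement's English description precedes it below -/
import Mathlib

section
/- For any point (z_{-2},...,z_2) in W_5 and any k∈Z_5, the functions R_k(z)=(z_{k+1},z_{k-2};z_{k-1},z_{k+2}) satisfy the quadratic relations R_{k-2}(z)·R_{k+2}(z) = 1 − R_k(z), indices taken modulo 5. -/
open Complex

noncomputable def crossRatio (a b c d : ℂ) : ℂ :=
  ((a - c) * (b - d)) / ((a - d) * (b - c))

noncomputable def Rk (z : ZMod 5 → ℂ) (k : ZMod 5) : ℂ :=
  crossRatio (z (k + 1)) (z (k - 2)) (z (k - 1)) (z (k + 2))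

/-! Writing `a, …, e` for `z (k-2), …, z (k+2)`, the three cross ratios only have the four
consecutive differences `a - b, …, d - e` in their denominators, which `W₅` keeps nonzero; once
they are cleared the relation is a polynomial identity in five variables. -/

theorem crossRatio_mul_crossRatio {a b c d e : ℂ}
    (hab : a ≠ b) (hbc : b ≠ c) (hcd : c ≠ d) (hde : d ≠ e) :
    crossRatio b d e c * crossRatio a c d b = 1 - crossRatio d a b e := by
  have := sub_ne_zero.2 hab
  have := sub_ne_zero.2 hbc
  have := sub_ne_zero.2 hcd
  have := sub_ne_zero.2 hde
  unfold crossRatio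
  field_simp
  ring

theorem Rk_sub_two (z : ZMod 5 → ℂ) (k : ZMod 5) :
    Rk z (k - 2) = crossRatio (z (k - 1)) (z (k + 1)) (z (k + 2)) (z k) := by
  unfold Rk; congr 2 <;> grind

theorem Rk_add_two (z : ZMod 5 → ℂ) (k : ZMod 5) :
    Rk z (k + 2) = crossRatio (z (k - 2)) (z k) (z (k + 1)) (z (k - 1)) := by
  unfold Rk; congr 2 <;> grind

/-- The quadratic relations `R_{k-2} R_{k+2} = 1 - R_k` on `W₅`. -/
theorem Rk_quadratic_relations (z : ZMod 5 → ℂ)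
    (hW : ∀ j : ZMod 5, z j ≠ z (j + 1)) (k : ZMod 5) :
    Rk z (k - 2) * Rk z (k + 2) = 1 - Rk z k := by
  have adjacent_ne : ∀ j i, i = j + 1 → z j ≠ z i := fun j _ h => h ▸ hW j
  rw [Rk_sub_two, Rk_add_two, Rk]
  exact crossRatio_mul_crossRatio (adjacent_ne _ _ (by ring)) (adjacent_ne _ _ (by ring)) (hW k)
    (adjacent_ne _ _ (by ring))
end

section
/- Let G be an entire function on C satisfying e^{−2πil/5}G(θ + iπ/3) + e^{2πil/5}G(θ − iπ/3) − G(θ) = 0 for all θ∈C, for some fixed l∈Z_5. If G is bounded, then G is identically zero. -/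
open Complex

lemma cos_ne_half (l : ℤ) (hl : -2 ≤ l ∧ l ≤ 2) :
    Real.cos (2 * Real.pi * l / 5) ≠ 1 / 2 := by
  obtain ⟨h1, h2⟩ := hl
  have hpi := Real.pi_pos
  have key : ∀ x : ℝ, 0 ≤ x → x ≤ Real.pi → x ≠ Real.pi / 3 → Real.cos x ≠ 1 / 2 := by
    intro x hx0 hxpi hne hcos
    exact hne (Real.injOn_cos ⟨hx0, hxpi⟩ ⟨by linarith, by linarith⟩
      (by rw [hcos, Real.cos_pi_div_three]))
  interval_cases l
  · rw [show (2 * Real.pi * ((-2 : ℤ) : ℝ) / 5) = -(4 * Real.pi / 5) by push_cast; ring,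
      Real.cos_neg]
    exact key _ (by linarith) (by linarith) (by intro h; linarith)
  · rw [show (2 * Real.pi * ((-1 : ℤ) : ℝ) / 5) = -(2 * Real.pi / 5) by push_cast; ring,
      Real.cos_neg]
    exact key _ (by linarith) (by linarith) (by intro h; linarith)
  · norm_num
  · rw [show (2 * Real.pi * ((1 : ℤ) : ℝ) / 5) = 2 * Real.pi / 5 by push_cast; ring]
    exact key _ (by linarith) (by linarith) (by intro h; linarith)
  · rw [show (2 * Real.pi * ((2 : ℤ) : ℝ) / 5) = 4 * Real.pi / 5 by push_cast; ring]
    exact key _ (by linarith) (by linarith) (by intro h; linarith)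

/-- A bounded entire solution of the twisted homogeneous shift equation vanishes. -/
theorem bounded_entire_solution_zero (l : ℤ) (hl : -2 ≤ l ∧ l ≤ 2) (G : ℂ → ℂ)
    (hG : Differentiable ℂ G) (hbd : ∃ C : ℝ, ∀ θ : ℂ, ‖G θ‖ ≤ C)
    (heq : ∀ θ : ℂ,
      Complex.exp (-(2 * (Real.pi : ℂ) * I * l / 5)) * G (θ + (Real.pi : ℂ) * I / 3)
        + Complex.exp (2 * (Real.pi : ℂ) * I * l / 5) * G (θ - (Real.pi : ℂ) * I / 3)
        - G θ = 0) :
    ∀ θ : ℂ, G θ = 0 := by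
  obtain ⟨C, hC⟩ := hbd
  have hb : Bornology.IsBounded (Set.range G) :=
    isBounded_iff_forall_norm_le.2 ⟨C, by rintro _ ⟨θ, rfl⟩; exact hC θ⟩
  have hconst : ∀ θ : ℂ, G θ = G 0 := fun θ =>
    hG.apply_eq_apply_of_bounded hb θ 0
  intro θ
  rw [hconst θ]
  have h0 := heq 0
  rw [hconst (0 + (Real.pi : ℂ) * I / 3), hconst (0 - (Real.pi : ℂ) * I / 3)] at h0
  set t : ℝ := 2 * Real.pi * l / 5 with ht
  clear_value t
  have harg : (2 * (Real.pi : ℂ) * I * l / 5) = (t : ℂ) * I := by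
    push_cast [ht]; ring
  rw [harg] at h0
  have hcos : Complex.exp ((t : ℂ) * I) + Complex.exp (-((t : ℂ) * I)) =
      2 * (Real.cos t : ℂ) := by
    rw [show -((t : ℂ) * I) = (-t : ℂ) * I by ring, Complex.exp_mul_I,
      Complex.exp_mul_I, Complex.cos_neg, Complex.sin_neg, Complex.ofReal_cos]
    ring
  have h0' : (Complex.exp ((t : ℂ) * I) + Complex.exp (-((t : ℂ) * I)) - 1) * G 0 = 0 := by
    linear_combination h0
  rw [hcos] at h0'
  rcases mul_eq_zero.1 h0' with h | h
  · exfalso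
    apply cos_ne_half l hl
    have h2 : (Real.cos t : ℂ) = (1 : ℂ) / 2 := by linear_combination h / 2
    have h2' : (Real.cos t : ℂ) = ((1 / 2 : ℝ) : ℂ) := by
      rw [Complex.ofReal_div, Complex.ofReal_one, Complex.ofReal_ofNat]; exact h2
    have h3 : Real.cos t = 1 / 2 := Complex.ofReal_inj.1 h2' 
    rw [ht] at h3
    exact h3
  · exact h
end

section
/- Let f be a bounded continuous function on the closed strip |Im θ| ≤ ε (ε>0) which is analytic in its interior, and fix l∈Z_5. Then there is at most one bounded analytic function F on the strip |Im θ| ≤ π/3 + ε satisfying e^{−2πil/5}F(θ+iπ/3) + e^{2πil/5}F(θ−iπ/3) − F(θ) = f(θ) for all |Im θ| ≤ ε. -/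
/-!
The difference `G = F₁ - F₂` solves the homogeneous equation
`G (θ + iπ/3) - ω G θ + ω² G (θ - iπ/3) = 0`, `ω = e^{2πil/5}`, whose characteristic roots
`c± = ω e^{±iπ/3}` are distinct and different from `1`. Hence `w± θ = G θ - c∓ G (θ - iπ/3)`
satisfies `w± (θ + iπ/3) = c± w± θ`. A bounded analytic function on a strip of height more than
`π/3` with this quasi-periodicity extends to a bounded entire function, constant by Liouville,
and so zero because `c± ≠ 1`. Eliminating between `w₊ = 0` and `w₋ = 0` gives `G = 0` on the
open strip, and the equation itself then gives `G = 0` on its boundary.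
-/

open Complex Set Filter Topology
open scoped Real

section Quasiperiodic

variable {E : Type*} [NormedAddCommGroup E] [NormedSpace ℂ E]

noncomputable def quasiperiodicExtension (p : ℝ) (c : ℂ) (w : ℂ → E) (z : ℂ) : E :=
  c ^ ⌊z.im / p⌋ • w (z - ⌊z.im / p⌋ * p * I)

lemma im_sub_floor_mul_mem_Ico {p : ℝ} (hp : 0 < p) (z : ℂ) :
    (z - ⌊z.im / p⌋ * p * I).im ∈ Ico 0 p := by
  have hle := (le_div_iff₀ hp).1 (Int.floor_le (z.im / p))
  have hlt := (div_lt_iff₀ hp).1 (Int.lt_floor_add_one (z.im / p))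
  have him : (z - ⌊z.im / p⌋ * p * I).im = z.im - ⌊z.im / p⌋ * p := by simp
  rw [him]
  constructor <;> linarith

variable {p a b : ℝ} {c : ℂ} {w : ℂ → E}

lemma quasiperiodicExtension_add_int_mul (hp : p ≠ 0) (hc : c ≠ 0) (z : ℂ) (k : ℤ) :
    quasiperiodicExtension p c w (z + k * p * I) = c ^ k • quasiperiodicExtension p c w z := by
  have hfloor : ⌊(z + k * p * I).im / p⌋ = ⌊z.im / p⌋ + k := by
    rw [← Int.floor_add_intCast]
    congr 1
    simp [add_div, hp]
  simp only [quasiperiodicExtension, hfloor, zpow_add₀ hc, mul_comm (c ^ ⌊z.im / p⌋), mul_smul]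
  congr 3
  push_cast
  ring

lemma apply_add_int_mul_of_quasiperiodic (hp : 0 < p) (hc : c ≠ 0)
    (hw : ∀ z : ℂ, z.im ∈ Ioo a b → z.im + p ∈ Ioo a b → w (z + p * I) = c • w z)
    (k : ℤ) (z : ℂ) (hz : z.im ∈ Ioo a b) (hzk : z.im + k * p ∈ Ioo a b) :
    w (z + k * p * I) = c ^ k • w z := by
  induction k using Int.induction_on with
  | zero => simp
  | succ n ih =>
    push_cast at hzk ih ⊢
    have hn : z.im + n * p ∈ Ioo a b :=
      ⟨by nlinarith [hz.1, (Nat.cast_nonneg n : (0 : ℝ) ≤ n)], by linarith [hzk.2]⟩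
    have hshift := hw (z + n * p * I) (by simpa using hn)
      (by simp; constructor <;> linarith [hzk.1, hzk.2])
    rw [show z + (n + 1) * p * I = z + n * p * I + p * I by ring, hshift, ih hn, smul_smul,
      zpow_add_one₀ hc, mul_comm]
  | pred n ih =>
    push_cast at hzk ih ⊢
    have hn : z.im + -n * p ∈ Ioo a b :=
      ⟨by linarith [hzk.1], by nlinarith [hz.2, (Nat.cast_nonneg n : (0 : ℝ) ≤ n)]⟩
    have hshift := hw (z + (-n - 1) * p * I) (by simpa using hzk)
      (by simp; constructor <;> linarith [hn.1, hn.2])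
    rw [show z + (-n - 1) * p * I + p * I = z + -n * p * I by ring, ih hn] at hshift
    rw [zpow_sub_one₀ hc, mul_comm (c ^ (-(n : ℤ))), mul_smul, hshift, inv_smul_smul₀ hc]

lemma quasiperiodicExtension_eq (ha : a < 0) (hb : p < b) (hp : 0 < p) (hc : c ≠ 0)
    (hw : ∀ z : ℂ, z.im ∈ Ioo a b → z.im + p ∈ Ioo a b → w (z + p * I) = c • w z)
    {z : ℂ} (hz : z.im ∈ Ioo a b) :
    quasiperiodicExtension p c w z = w z := by
  set k := ⌊z.im / p⌋
  obtain ⟨h0, hp'⟩ := im_sub_floor_mul_mem_Ico hp z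
  have hmem : (z - k * p * I).im ∈ Ioo a b := ⟨by linarith, by linarith⟩
  have h := apply_add_int_mul_of_quasiperiodic hp hc hw k _ hmem (by simpa using hz)
  rw [sub_add_cancel] at h
  rw [h]
  rfl

lemma differentiable_quasiperiodicExtension (ha : a < 0) (hb : p < b) (hp : 0 < p)
    (hc : c ≠ 0)
    (hw : ∀ z : ℂ, z.im ∈ Ioo a b → z.im + p ∈ Ioo a b → w (z + p * I) = c • w z)
    (hwd : DifferentiableOn ℂ w (im ⁻¹' Ioo a b)) :
    Differentiable ℂ (quasiperiodicExtension p c w) := by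
  intro z₀
  set k := ⌊z₀.im / p⌋
  have hS : IsOpen (im ⁻¹' Ioo a b) := isOpen_Ioo.preimage continuous_im
  have hmem : z₀ - k * p * I ∈ im ⁻¹' Ioo a b := by
    obtain ⟨h0, hp'⟩ := im_sub_floor_mul_mem_Ico hp z₀
    exact ⟨by linarith, by linarith⟩
  have hshift : Tendsto (· - k * p * I) (𝓝 z₀) (𝓝 (z₀ - k * p * I)) :=
    (continuous_sub_right _).tendsto z₀
  have hev : quasiperiodicExtension p c w =ᶠ[𝓝 z₀] fun z => c ^ k • w (z - k * p * I) := by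
    filter_upwards [hshift.eventually (hS.mem_nhds hmem)] with z hz
    rw [← quasiperiodicExtension_eq ha hb hp hc hw hz,
      ← quasiperiodicExtension_add_int_mul hp.ne' hc, sub_add_cancel]
  rw [hev.differentiableAt_iff]
  exact ((hwd.differentiableAt (hS.mem_nhds hmem)).comp z₀
    (differentiableAt_id.sub_const _)).const_smul _

lemma norm_quasiperiodicExtension_le (hp : 0 < p) (hc : ‖c‖ = 1) {C : ℝ}
    (hC : ∀ z : ℂ, z.im ∈ Ico 0 p → ‖w z‖ ≤ C) (z : ℂ) :
    ‖quasiperiodicExtension p c w z‖ ≤ C := by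
  rw [quasiperiodicExtension, norm_smul, norm_zpow, hc, one_zpow, one_mul]
  exact hC _ (im_sub_floor_mul_mem_Ico hp z)

theorem eq_zero_of_quasiperiodic (ha : a < 0) (hb : p < b) (hp : 0 < p) (hc : ‖c‖ = 1)
    (hc1 : c ≠ 1) (hwd : DifferentiableOn ℂ w (im ⁻¹' Ioo a b))
    (hwb : ∃ C, ∀ z : ℂ, z.im ∈ Ioo a b → ‖w z‖ ≤ C)
    (hw : ∀ z : ℂ, z.im ∈ Ioo a b → z.im + p ∈ Ioo a b → w (z + p * I) = c • w z)
    {z : ℂ} (hz : z.im ∈ Ioo a b) : w z = 0 := by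
  have hc0 : c ≠ 0 := ne_zero_of_norm_ne_zero (hc.trans_ne one_ne_zero)
  obtain ⟨C, hC⟩ := hwb
  have hbdd : ∀ z, ‖quasiperiodicExtension p c w z‖ ≤ C :=
    norm_quasiperiodicExtension_le hp hc fun z hz => hC z ⟨by linarith [hz.1], by linarith [hz.2]⟩
  have hconst : ∀ z₁ z₂, quasiperiodicExtension p c w z₁ = quasiperiodicExtension p c w z₂ :=
    (differentiable_quasiperiodicExtension ha hb hp hc0 hw hwd).apply_eq_apply_of_bounded
      (isBounded_iff_forall_norm_le.2 ⟨C, forall_mem_range.2 hbdd⟩)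
  have hv0 : quasiperiodicExtension p c w 0 = 0 := by
    have hfix := quasiperiodicExtension_add_int_mul (w := w) hp.ne' hc0 0 1
    rw [hconst _ 0, zpow_one] at hfix
    have h : (c - 1) • quasiperiodicExtension p c w 0 = 0 := by
      rw [sub_smul, ← hfix, one_smul, sub_self]
    exact (smul_eq_zero.1 h).resolve_left (sub_ne_zero.2 hc1)
  rw [← quasiperiodicExtension_eq ha hb hp hc0 hw hz, hconst z 0, hv0]

end Quasiperiodic

section ShiftEquation

variable {E : Type*} [NormedAddCommGroup E] [NormedSpace ℂ E] {p ε : ℝ} {G : ℂ → E}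

lemma sub_smul_shift_eq_zero_of_shift_eq (hp : 0 < p) (hε : 0 < ε) {c d : ℂ} (hc : ‖c‖ = 1)
    (hc1 : c ≠ 1) (hd : ‖d‖ = 1) (hGd : DifferentiableOn ℂ G {θ | |θ.im| < p + ε})
    (hGb : ∃ C, ∀ θ : ℂ, |θ.im| < p + ε → ‖G θ‖ ≤ C)
    (hG : ∀ θ : ℂ, |θ.im| < ε →
      G (θ + p * I) - (c + d) • G θ + (c * d) • G (θ - p * I) = 0)
    {θ : ℂ} (hθ : θ.im ∈ Ioo (-ε) (p + ε)) : G θ - d • G (θ - p * I) = 0 := by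
  have hmem : ∀ z : ℂ, z.im ∈ Ioo (-ε) (p + ε) →
      |z.im| < p + ε ∧ |(z - p * I).im| < p + ε := by
    intro z hz
    simp only [sub_im, mul_I_im, ofReal_re, abs_lt]
    constructor <;> constructor <;> linarith [hz.1, hz.2]
  refine eq_zero_of_quasiperiodic (w := fun z => G z - d • G (z - p * I)) (neg_lt_zero.2 hε)
    (lt_add_of_pos_right p hε) hp hc hc1 ?_ ?_ (fun z hz hzp => ?_) hθ
  · exact (hGd.mono fun z hz => (hmem z hz).1).sub
      ((hGd.comp (differentiableOn_id.sub_const _) fun z hz => (hmem z hz).2).const_smul d)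
  · obtain ⟨C, hC⟩ := hGb
    refine ⟨C + C, fun z hz => (norm_sub_le _ _).trans ?_⟩
    rw [norm_smul, hd, one_mul]
    exact add_le_add (hC z (hmem z hz).1) (hC _ (hmem z hz).2)
  · have hz' : |z.im| < ε := abs_lt.2 ⟨hz.1, by linarith [hzp.2]⟩
    rw [add_sub_cancel_right]
    linear_combination (norm := module) hG z hz'

theorem eq_zero_of_shift_eq (hp : 0 < p) (hε : 0 < ε) {c₁ c₂ : ℂ} (hc₁ : ‖c₁‖ = 1)
    (hc₂ : ‖c₂‖ = 1) (hc₁1 : c₁ ≠ 1) (hc₂1 : c₂ ≠ 1) (hc : c₁ ≠ c₂)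
    (hGd : DifferentiableOn ℂ G {θ | |θ.im| < p + ε})
    (hGb : ∃ C, ∀ θ : ℂ, |θ.im| ≤ p + ε → ‖G θ‖ ≤ C)
    (hG : ∀ θ : ℂ, |θ.im| ≤ ε →
      G (θ + p * I) - (c₁ + c₂) • G θ + (c₁ * c₂) • G (θ - p * I) = 0) :
    ∀ θ : ℂ, |θ.im| ≤ p + ε → G θ = 0 := by
  have hGb' : ∃ C, ∀ θ : ℂ, |θ.im| < p + ε → ‖G θ‖ ≤ C :=
    hGb.imp fun C hC θ hθ => hC θ hθ.le
  have hG' : ∀ θ : ℂ, |θ.im| < ε → _ := fun θ hθ => hG θ hθ.le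
  have hstrip : ∀ θ : ℂ, θ.im ∈ Ioo (-ε) (p + ε) → G (θ - p * I) = 0 ∧ G θ = 0 := by
    intro θ hθ
    have h₁ := sub_smul_shift_eq_zero_of_shift_eq hp hε hc₁ hc₁1 hc₂ hGd hGb' hG' hθ
    have h₂ := sub_smul_shift_eq_zero_of_shift_eq hp hε hc₂ hc₂1 hc₁ hGd hGb'
      (by simpa only [add_comm c₂, mul_comm c₂] using hG') hθ
    have h : (c₁ - c₂) • G (θ - p * I) = 0 := by linear_combination (norm := module) h₁ - h₂
    have h0 := (smul_eq_zero.1 h).resolve_left (sub_ne_zero.2 hc)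
    exact ⟨h0, by simpa [h0] using h₁⟩
  have hopen : ∀ θ : ℂ, |θ.im| < p + ε → G θ = 0 := by
    intro θ hθ
    obtain ⟨hlo, hhi⟩ := abs_lt.1 hθ
    rcases lt_or_ge (-ε) θ.im with h | h
    · exact (hstrip θ ⟨h, hhi⟩).2
    · simpa using (hstrip (θ + p * I) (by simp; constructor <;> linarith)).1
  intro θ hθ
  rcases hθ.lt_or_eq with hθ | hθ
  · exact hopen θ hθ
  -- On the boundary, the equation at `θ ∓ p * I` expresses `G θ` through two values in the open
  -- strip.
  rcases (abs_eq (by positivity)).1 hθ with h | h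
  · have hrel := hG (θ - p * I) (by simp [h, abs_of_pos hε])
    rwa [sub_add_cancel, hopen (θ - p * I) (by simp [h, abs_of_pos hε]; linarith),
      hopen (θ - p * I - p * I) (by simp [h]; rw [abs_lt]; constructor <;> linarith),
      smul_zero, smul_zero, sub_zero, add_zero] at hrel
  · have hrel := hG (θ + p * I) (by simp [h, abs_of_pos hε])
    rw [add_sub_cancel_right, hopen (θ + p * I) (by simp [h, abs_of_pos hε]; linarith),
      hopen (θ + p * I + p * I) (by simp [h]; rw [abs_lt]; constructor <;> linarith),
      smul_zero, sub_zero, zero_add] at hrel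
    have hc₁₂ : c₁ * c₂ ≠ 0 := mul_ne_zero (ne_zero_of_norm_ne_zero (by simp [hc₁]))
      (ne_zero_of_norm_ne_zero (by simp [hc₂]))
    exact (smul_eq_zero.1 hrel).resolve_left hc₁₂

end ShiftEquation

lemma exp_add_pi_div_three_add_exp_sub_pi_div_three (z : ℂ) :
    exp (z + π * I / 3) + exp (z - π * I / 3) = exp z := by
  have h : 2 * cos ((π / 3 : ℝ) : ℂ) = 1 := by
    rw [← ofReal_cos, Real.cos_pi_div_three]
    norm_num
  rw [two_cos] at h
  push_cast at h
  rw [show z + π * I / 3 = z + π / 3 * I by ring, show z - π * I / 3 = z + -(π / 3) * I by ring,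
    exp_add, exp_add, ← mul_add, h, mul_one]

lemma exp_int_mul_two_pi_I_div_ne_one {n : ℕ} (hn : n ≠ 0) {m : ℤ} (h : ¬ (n : ℤ) ∣ m) :
    exp (m * (2 * π * I / n)) ≠ 1 := by
  rw [exp_int_mul]
  exact mt ((isPrimitiveRoot_exp n hn).zpow_eq_one_iff_dvd m).1 h

theorem shift_equation_uniqueness_general (ε : ℝ) (hε : 0 < ε) (l : ℤ)
    (f F₁ F₂ : ℂ → ℂ)
    (hF₁a : DifferentiableOn ℂ F₁ {θ : ℂ | |θ.im| < Real.pi / 3 + ε})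
    (hF₁b : ∃ C : ℝ, ∀ θ : ℂ, |θ.im| ≤ Real.pi / 3 + ε → ‖F₁ θ‖ ≤ C)
    (hF₂a : DifferentiableOn ℂ F₂ {θ : ℂ | |θ.im| < Real.pi / 3 + ε})
    (hF₂b : ∃ C : ℝ, ∀ θ : ℂ, |θ.im| ≤ Real.pi / 3 + ε → ‖F₂ θ‖ ≤ C)
    (heq₁ : ∀ θ : ℂ, |θ.im| ≤ ε →
      Complex.exp (-(2 * (Real.pi : ℂ) * I * l / 5)) * F₁ (θ + (Real.pi : ℂ) * I / 3)
        + Complex.exp (2 * (Real.pi : ℂ) * I * l / 5) * F₁ (θ - (Real.pi : ℂ) * I / 3)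
        - F₁ θ = f θ)
    (heq₂ : ∀ θ : ℂ, |θ.im| ≤ ε →
      Complex.exp (-(2 * (Real.pi : ℂ) * I * l / 5)) * F₂ (θ + (Real.pi : ℂ) * I / 3)
        + Complex.exp (2 * (Real.pi : ℂ) * I * l / 5) * F₂ (θ - (Real.pi : ℂ) * I / 3)
        - F₂ θ = f θ) :
    ∀ θ : ℂ, |θ.im| ≤ Real.pi / 3 + ε → F₁ θ = F₂ θ := by
  set a : ℂ := 2 * π * I * l / 5
  -- With `ζ = exp (2πi/30)`, the roots `exp (a ± πi/3)` are `ζ ^ (6l ± 5)`, with ratio `ζ ^ 10`.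
  have hc₁1 : exp (a + π * I / 3) ≠ 1 := by
    rw [show a + π * I / 3 = ((6 * l + 5 : ℤ) : ℂ) * (2 * π * I / (30 : ℕ)) by push_cast; ring]
    exact exp_int_mul_two_pi_I_div_ne_one (by norm_num) (by omega)
  have hc₂1 : exp (a - π * I / 3) ≠ 1 := by
    rw [show a - π * I / 3 = ((6 * l - 5 : ℤ) : ℂ) * (2 * π * I / (30 : ℕ)) by push_cast; ring]
    exact exp_int_mul_two_pi_I_div_ne_one (by norm_num) (by omega)
  have hc : exp (a + π * I / 3) ≠ exp (a - π * I / 3) := by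
    rw [show a + π * I / 3 = a - π * I / 3 + ((10 : ℤ) : ℂ) * (2 * π * I / (30 : ℕ)) by
      push_cast; ring, exp_add, Ne, mul_eq_left₀ (exp_ne_zero _)]
    exact exp_int_mul_two_pi_I_div_ne_one (by norm_num) (by norm_num)
  obtain ⟨C₁, hC₁⟩ := hF₁b
  obtain ⟨C₂, hC₂⟩ := hF₂b
  have hGb : ∀ θ : ℂ, |θ.im| ≤ π / 3 + ε → ‖(F₁ - F₂) θ‖ ≤ C₁ + C₂ := fun θ hθ =>
    (norm_sub_le _ _).trans (add_le_add (hC₁ θ hθ) (hC₂ θ hθ))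
  intro θ hθ
  refine sub_eq_zero.1 (eq_zero_of_shift_eq (by positivity) hε (by simp [norm_exp, a])
    (by simp [norm_exp, a]) hc₁1 hc₂1 hc (hF₁a.sub hF₂a) ⟨C₁ + C₂, hGb⟩ (fun θ hθ => ?_) θ hθ)
  have hinv : exp (-a) * exp a = 1 := by rw [← exp_add, neg_add_cancel, exp_zero]
  rw [show ((π / 3 : ℝ) : ℂ) * I = π * I / 3 by push_cast; ring,
    exp_add_pi_div_three_add_exp_sub_pi_div_three, ← exp_add,
    show a + π * I / 3 + (a - π * I / 3) = a + a by ring, exp_add]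
  simp only [Pi.sub_apply, smul_eq_mul]
  linear_combination exp a * (heq₁ θ hθ - heq₂ θ hθ)
    - (F₁ (θ + π * I / 3) - F₂ (θ + π * I / 3)) * hinv

/-- Uniqueness of bounded analytic solutions of the shift equation on a strip. -/
theorem shift_equation_uniqueness (ε : ℝ) (hε : 0 < ε) (l : ℤ) (hl : -2 ≤ l ∧ l ≤ 2)
    (f F₁ F₂ : ℂ → ℂ)
    (hfc : ContinuousOn f {θ : ℂ | |θ.im| ≤ ε})
    (hfa : DifferentiableOn ℂ f {θ : ℂ | |θ.im| < ε})
    (hfb : ∃ C : ℝ, ∀ θ : ℂ, |θ.im| ≤ ε → ‖f θ‖ ≤ C)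
    (hF₁c : ContinuousOn F₁ {θ : ℂ | |θ.im| ≤ Real.pi / 3 + ε})
    (hF₁a : DifferentiableOn ℂ F₁ {θ : ℂ | |θ.im| < Real.pi / 3 + ε})
    (hF₁b : ∃ C : ℝ, ∀ θ : ℂ, |θ.im| ≤ Real.pi / 3 + ε → ‖F₁ θ‖ ≤ C)
    (hF₂c : ContinuousOn F₂ {θ : ℂ | |θ.im| ≤ Real.pi / 3 + ε})
    (hF₂a : DifferentiableOn ℂ F₂ {θ : ℂ | |θ.im| < Real.pi / 3 + ε})
    (hF₂b : ∃ C : ℝ, ∀ θ : ℂ, |θ.im| ≤ Real.pi / 3 + ε → ‖F₂ θ‖ ≤ C)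
    (heq₁ : ∀ θ : ℂ, |θ.im| ≤ ε →
      Complex.exp (-(2 * (Real.pi : ℂ) * I * l / 5)) * F₁ (θ + (Real.pi : ℂ) * I / 3)
        + Complex.exp (2 * (Real.pi : ℂ) * I * l / 5) * F₁ (θ - (Real.pi : ℂ) * I / 3)
        - F₁ θ = f θ)
    (heq₂ : ∀ θ : ℂ, |θ.im| ≤ ε →
      Complex.exp (-(2 * (Real.pi : ℂ) * I * l / 5)) * F₂ (θ + (Real.pi : ℂ) * I / 3)
        + Complex.exp (2 * (Real.pi : ℂ) * I * l / 5) * F₂ (θ - (Real.pi : ℂ) * I / 3)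
        - F₂ θ = f θ) :
    ∀ θ : ℂ, |θ.im| ≤ Real.pi / 3 + ε → F₁ θ = F₂ θ :=
  shift_equation_uniqueness_general ε hε l f F₁ F₂ hF₁a hF₁b hF₂a hF₂b heq₁ heq₂
end
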